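/- For l ≥ 3 and n ≥ l, the number of permutations in S_n with pinnacle set {l} equals 2^{n-2}·(2^{l-2} - 1). -/

import Mathlib

/-- `i` is a peak of the permutation `w` of `{1,…,n}` (represented on `Fin n`):
`0 < i < n-1` (0-indexed) and `w(i-1) < w(i) > w(i+1)`. -/
def IsPeak {n : ℕ} (w : Equiv.Perm (Fin n)) (i : Fin n) : Prop :=
  0 < i.val ∧ ∃ h : i.val + 1 < n,
    w ⟨i.val - 1, Nat.lt_of_le_of_lt (Nat.sub_le _ _) i.isLt⟩ < w i ∧
    w ⟨i.val + 1, h⟩ < w i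

/-- The pinnacle set of `w`, as a set of values in `{1,…,n}`. -/
def Pin {n : ℕ} (w : Equiv.Perm (Fin n)) : Set ℕ :=
  {v | ∃ i : Fin n, IsPeak w i ∧ v = (w i).val + 1}

/-- `p_S(n)`: the number of permutations in `S_n` with pinnacle set `S`. -/
noncomputable def pcount (n : ℕ) (S : Set ℕ) : ℕ :=
  Nat.card {w : Equiv.Perm (Fin n) // Pin w = S}

/-- `S` is an admissible pinnacle set. -/
def Admissible (S : Finset ℕ) : Prop :=
  ∃ (n : ℕ) (w : Equiv.Perm (Fin n)), Pin w = ↑S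


/-!
If `n > l`, the value `n` is not a pinnacle, so it sits at one end of `w`; deleting it is a
two-to-one map onto the permutations of `[n-1]` with the same pinnacle set, whence
`p_{l}(n) = 2^(n-l) p_{l}(l)`.
For `n = l` the maximum `l` is interior, so `w = A l B` with `A`, `B` nonempty and peak-free.
A peak-free arrangement of `k ≥ 1` values is again built by placing the maximum at one of the two
ends, so there are `2^(k-1)` of them. Summing `2^(|T|-1) 2^(l-2-|T|)` over the `2^(l-1) - 2`
nonempty proper value sets `T` of `A` gives `2^(l-2) (2^(l-2) - 1)`.
-/

namespace List

variable {α : Type*}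

theorem eq_nil_of_prefix_cons_of_notMem {t B : List α} {m : α} (h : t <+: m :: B)
    (hm : m ∉ t) : t = [] := by
  cases t with
  | nil => rfl
  | cons x t => exact absurd (by simp [(cons_prefix_cons.1 h).1]) hm

theorem infix_or_infix_of_infix_append_cons {t A B : List α} {m : α}
    (h : t <:+: A ++ m :: B) (hm : m ∉ t) : t <:+: A ∨ t <:+: B := by
  rcases infix_append_iff.1 h with h | h | ⟨t₁, t₂, rfl, h₁, h₂⟩
  · exact .inl h
  · rcases infix_cons_iff.1 h with h | h
    · simp [eq_nil_of_prefix_cons_of_notMem h hm]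
    · exact .inr h
  · rw [eq_nil_of_prefix_cons_of_notMem h₂ (by simp_all), append_nil]
    exact .inl h₁.isInfix

variable [LinearOrder α]

def pinnacles (L : List α) : Set α :=
  {b | ∃ a c, [a, b, c] <:+: L ∧ a < b ∧ c < b}

@[simp]
theorem pinnacles_nil : ([] : List α).pinnacles = ∅ := by
  simp [pinnacles]

theorem pinnacles_subset (L : List α) : L.pinnacles ⊆ {x | x ∈ L} := by
  rintro b ⟨a, c, h, -⟩
  exact h.subset (by simp)

@[simp]
theorem pinnacles_reverse (L : List α) : L.reverse.pinnacles = L.pinnacles := by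
  ext b
  constructor <;> rintro ⟨a, c, h, hab, hcb⟩ <;> refine ⟨c, a, ?_, hcb, hab⟩
  · simpa using h.reverse
  · simpa using h.reverse

theorem pinnacles_cons_of_forall_lt {m : α} {L : List α} (hL : ∀ x ∈ L, x < m) :
    (m :: L).pinnacles = L.pinnacles := by
  ext b
  constructor
  · rintro ⟨a, c, h, hab, hcb⟩
    rcases infix_cons_iff.1 h with h | h
    · obtain ⟨rfl, hbc⟩ := cons_prefix_cons.1 h
      exact absurd (hL b (hbc.subset (by simp))) hab.not_gt
    · exact ⟨a, c, h, hab, hcb⟩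
  · rintro ⟨a, c, h, hab, hcb⟩
    exact ⟨a, c, infix_cons h, hab, hcb⟩

theorem pinnacles_concat_of_forall_lt {m : α} {L : List α} (hL : ∀ x ∈ L, x < m) :
    (L ++ [m]).pinnacles = L.pinnacles := by
  rw [← pinnacles_reverse, reverse_concat, pinnacles_cons_of_forall_lt (by simpa using hL),
    pinnacles_reverse]

theorem mem_pinnacles_append_cons {A B : List α} {m : α} (hA : A ≠ []) (hB : B ≠ [])
    (hAm : ∀ x ∈ A, x < m) (hBm : ∀ x ∈ B, x < m) : m ∈ (A ++ m :: B).pinnacles := by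
  obtain ⟨A, a, rfl⟩ := (eq_nil_or_concat A).resolve_left hA
  obtain ⟨b, B, rfl⟩ := exists_cons_of_ne_nil hB
  exact ⟨a, b, ⟨A, B, by simp⟩, hAm a (by simp), hBm b (by simp)⟩

theorem pinnacles_append_cons {A B : List α} {m : α} (hA : A ≠ []) (hB : B ≠ [])
    (hAm : ∀ x ∈ A, x < m) (hBm : ∀ x ∈ B, x < m) :
    (A ++ m :: B).pinnacles = insert m (A.pinnacles ∪ B.pinnacles) := by
  ext b
  constructor
  · rintro ⟨a, c, h, hab, hcb⟩
    by_cases hbm : b = m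
    · exact .inl hbm
    have hb : b < m := by
      have : b ∈ A ++ m :: B := h.subset (by simp)
      simp only [mem_append, mem_cons] at this
      rcases this with h | h | h
      exacts [hAm b h, absurd h hbm, hBm b h]
    have hm : m ∉ [a, b, c] := by
      simp only [mem_cons, not_mem_nil, or_false, not_or]
      exact ⟨(hab.trans hb).ne', hb.ne', (hcb.trans hb).ne'⟩
    rcases infix_or_infix_of_infix_append_cons h hm with h | h
    exacts [.inr (.inl ⟨a, c, h, hab, hcb⟩), .inr (.inr ⟨a, c, h, hab, hcb⟩)]
  · rintro (rfl | ⟨a, c, h, hab, hcb⟩ | ⟨a, c, h, hab, hcb⟩)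
    · exact mem_pinnacles_append_cons hA hB hAm hBm
    · exact ⟨a, c, infix_append_of_infix_left h, hab, hcb⟩
    · exact ⟨a, c, infix_append_of_infix_right (infix_cons h), hab, hcb⟩

theorem mem_pinnacles_ofFn {n : ℕ} (f : Fin n → α) (b : α) :
    b ∈ (ofFn f).pinnacles ↔ ∃ i : Fin n, (0 < i.val ∧ ∃ h : i.val + 1 < n,
      f ⟨i.val - 1, by omega⟩ < f i ∧ f ⟨i.val + 1, h⟩ < f i) ∧ b = f i := by
  simp only [pinnacles, Set.mem_ofPred_eq, infix_iff_getElem?]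
  constructor
  · rintro ⟨a, c, ⟨k, hk, hget⟩, hab, hcb⟩
    have ha : ∃ h : k < n, f ⟨k, h⟩ = a := by simpa using hget 0 (by simp)
    have hb : ∃ h : k + 1 < n, f ⟨k + 1, h⟩ = b := by
      simpa [Nat.add_comm] using hget 1 (by simp)
    have hc : ∃ h : k + 2 < n, f ⟨k + 2, h⟩ = c := by
      simpa [Nat.add_comm] using hget 2 (by simp)
    obtain ⟨_, rfl⟩ := ha
    obtain ⟨_, rfl⟩ := hb
    obtain ⟨_, rfl⟩ := hc
    exact ⟨⟨k + 1, by omega⟩, ⟨by simp, by simp; omega, hab, hcb⟩, rfl⟩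
  · rintro ⟨⟨_ | k, hk⟩, ⟨hi0, hi1, hl, hr⟩, rfl⟩
    · exact absurd hi0 (lt_irrefl 0)
    dsimp only at hi1
    refine ⟨_, _, ⟨k, by simp; omega, fun j hj => ?_⟩, hl, hr⟩
    simp only [length_cons, length_nil] at hj
    interval_cases j <;> simp [Nat.add_comm, Nat.add_left_comm] <;> omega

end List

open Finset

section Arrangements

variable {α : Type*} [LinearOrder α]

open Classical in
noncomputable def arrangementsWithPinnacles (s : Finset α) (P : Set α) : Finset (List α) :=
  {L ∈ s.toList.permutations.toFinset | L.pinnacles = P}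

theorem mem_arrangementsWithPinnacles {s : Finset α} {P : Set α} {L : List α} :
    L ∈ arrangementsWithPinnacles s P ↔ (L : Multiset α) = s.val ∧ L.pinnacles = P := by
  rw [arrangementsWithPinnacles, mem_filter, List.mem_toFinset, List.mem_permutations,
    ← Multiset.coe_eq_coe, coe_toList]

theorem reverse_mem_arrangementsWithPinnacles {s : Finset α} {P : Set α} {L : List α} :
    L.reverse ∈ arrangementsWithPinnacles s P ↔ L ∈ arrangementsWithPinnacles s P := by
  simp [mem_arrangementsWithPinnacles]

theorem coe_append_cons_eq_insert_val_iff {s : Finset α} {m : α} {A B : List α}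
    (hsm : ∀ x ∈ s, x < m) :
    ((A ++ m :: B : List α) : Multiset α) = (insert m s).val ↔
      ((A ++ B : List α) : Multiset α) = s.val := by
  rw [insert_val_of_notMem fun h => (hsm m h).false, ← Multiset.coe_add, ← Multiset.cons_coe,
    Multiset.add_cons, Multiset.cons_inj_right, Multiset.coe_add]

theorem forall_lt_of_coe_eq_val {s : Finset α} {m : α} {L : List α} (hsm : ∀ x ∈ s, x < m)
    (hL : (L : Multiset α) = s.val) : ∀ x ∈ L, x < m :=
  fun x hx => hsm x (by simp [← mem_val, ← hL, hx])

theorem cons_mem_arrangementsWithPinnacles_insert {s : Finset α} {P : Set α} {m : α}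
    {L : List α} (hsm : ∀ x ∈ s, x < m) :
    m :: L ∈ arrangementsWithPinnacles (insert m s) P ↔
      L ∈ arrangementsWithPinnacles s P := by
  rw [mem_arrangementsWithPinnacles, mem_arrangementsWithPinnacles, ← List.nil_append (m :: L),
    coe_append_cons_eq_insert_val_iff hsm, List.nil_append, List.nil_append]
  exact and_congr_right fun hL => by
    rw [List.pinnacles_cons_of_forall_lt (forall_lt_of_coe_eq_val hsm hL)]

theorem concat_mem_arrangementsWithPinnacles_insert {s : Finset α} {P : Set α} {m : α}
    {L : List α} (hsm : ∀ x ∈ s, x < m) :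
    L ++ [m] ∈ arrangementsWithPinnacles (insert m s) P ↔
      L ∈ arrangementsWithPinnacles s P := by
  rw [← reverse_mem_arrangementsWithPinnacles, List.reverse_concat,
    cons_mem_arrangementsWithPinnacles_insert hsm, reverse_mem_arrangementsWithPinnacles]

theorem arrangementsWithPinnacles_insert_of_notMem {s : Finset α} {P : Set α} {m : α}
    (hsm : ∀ x ∈ s, x < m) (hP : m ∉ P) :
    arrangementsWithPinnacles (insert m s) P =
      (arrangementsWithPinnacles s P).image (m :: ·) ∪
        (arrangementsWithPinnacles s P).image (· ++ [m]) := by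
  ext L
  simp only [mem_union, mem_image]
  constructor
  · intro hL
    have hmL : m ∈ L := by
      simp [← Multiset.mem_coe, (mem_arrangementsWithPinnacles.1 hL).1]
    obtain ⟨A, B, rfl⟩ := List.append_of_mem hmL
    by_cases hA : A = []
    · subst hA
      exact .inl ⟨B, (cons_mem_arrangementsWithPinnacles_insert hsm).1 hL, rfl⟩
    by_cases hB : B = []
    · subst hB
      exact .inr ⟨A, (concat_mem_arrangementsWithPinnacles_insert hsm).1 hL, rfl⟩
    have hlt := forall_lt_of_coe_eq_val hsm
      ((coe_append_cons_eq_insert_val_iff hsm).1 (mem_arrangementsWithPinnacles.1 hL).1)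
    refine absurd ?_ hP
    rw [← (mem_arrangementsWithPinnacles.1 hL).2]
    exact List.mem_pinnacles_append_cons hA hB (fun x hx => hlt x (by simp [hx]))
      (fun x hx => hlt x (by simp [hx]))
  · rintro (⟨B, hB, rfl⟩ | ⟨A, hA, rfl⟩)
    exacts [(cons_mem_arrangementsWithPinnacles_insert hsm).2 hB,
      (concat_mem_arrangementsWithPinnacles_insert hsm).2 hA]

theorem card_arrangementsWithPinnacles_insert_of_notMem {s : Finset α} {P : Set α} {m : α}
    (hs : s.Nonempty) (hsm : ∀ x ∈ s, x < m) (hP : m ∉ P) :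
    #(arrangementsWithPinnacles (insert m s) P) = 2 * #(arrangementsWithPinnacles s P) := by
  set X := arrangementsWithPinnacles s P
  have hdisj : Disjoint (X.image (m :: ·)) (X.image (· ++ [m])) := by
    rw [disjoint_left]
    intro L hL hL'
    obtain ⟨B, hB, rfl⟩ := mem_image.1 hL
    obtain ⟨A, hA, h⟩ := mem_image.1 hL'
    replace hA := (mem_arrangementsWithPinnacles.1 hA).1
    cases A with
    | nil =>
      obtain ⟨x, hx⟩ := hs
      simp [← mem_val, ← hA] at hx
    | cons a A =>
      obtain ⟨rfl, -⟩ := List.cons_eq_cons.1 h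
      exact (hsm a (by simp [← mem_val, ← hA])).false
  rw [arrangementsWithPinnacles_insert_of_notMem hsm hP, card_union_of_disjoint hdisj,
    card_image_of_injective _ List.cons_injective,
    card_image_of_injective _ (List.append_left_injective [m]), two_mul]

theorem card_arrangementsWithPinnacles_empty (s : Finset α) :
    #(arrangementsWithPinnacles s ∅) = 2 ^ (#s - 1) := by
  induction s using Finset.induction_on_max with
  | empty =>
    have : arrangementsWithPinnacles (∅ : Finset α) ∅ = {[]} := by
      ext L
      simp +contextual [mem_arrangementsWithPinnacles]
    simp [this]
  | insert m s hsm ih =>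
    rcases s.eq_empty_or_nonempty with rfl | hs
    · have : arrangementsWithPinnacles {m} ∅ = {[m]} := by
        ext L
        simp +contextual [mem_arrangementsWithPinnacles,
          List.pinnacles_cons_of_forall_lt]
      simp [this]
    · rw [card_arrangementsWithPinnacles_insert_of_notMem hs hsm (Set.notMem_empty m), ih,
        card_insert_of_notMem fun h => (hsm m h).false, ← pow_succ']
      congr 1
      have := hs.card_pos
      omega

theorem append_cons_mem_arrangementsWithPinnacles_insert_singleton {s : Finset α} {m : α}
    {A B : List α} (hsm : ∀ x ∈ s, x < m) :
    A ++ m :: B ∈ arrangementsWithPinnacles (insert m s) {m} ↔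
      ((A ++ B : List α) : Multiset α) = s.val ∧ A ≠ [] ∧ B ≠ [] ∧
        A.pinnacles = ∅ ∧ B.pinnacles = ∅ := by
  rw [mem_arrangementsWithPinnacles, coe_append_cons_eq_insert_val_iff hsm]
  refine and_congr_right fun hAB => ?_
  have hlt := forall_lt_of_coe_eq_val hsm hAB
  have hAm : ∀ x ∈ A, x < m := fun x hx => hlt x (by simp [hx])
  have hBm : ∀ x ∈ B, x < m := fun x hx => hlt x (by simp [hx])
  constructor
  · intro hpin
    have hA : A ≠ [] := by
      rintro rfl
      rw [List.nil_append, List.pinnacles_cons_of_forall_lt hBm] at hpin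
      exact (hBm m (B.pinnacles_subset (hpin ▸ rfl))).false
    have hB : B ≠ [] := by
      rintro rfl
      rw [List.pinnacles_concat_of_forall_lt hAm] at hpin
      exact (hAm m (A.pinnacles_subset (hpin ▸ rfl))).false
    rw [List.pinnacles_append_cons hA hB hAm hBm] at hpin
    have hsub : A.pinnacles ∪ B.pinnacles ⊆ {m} := hpin ▸ Set.subset_insert _ _
    refine ⟨hA, hB, Set.eq_empty_of_forall_notMem fun x hx => ?_,
      Set.eq_empty_of_forall_notMem fun x hx => ?_⟩
    · exact (hAm x (A.pinnacles_subset hx)).ne (hsub (.inl hx))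
    · exact (hBm x (B.pinnacles_subset hx)).ne (hsub (.inr hx))
  · rintro ⟨hA, hB, hpA, hpB⟩
    rw [List.pinnacles_append_cons hA hB hAm hBm, hpA, hpB, Set.union_empty, insert_empty_eq]

theorem append_cons_mem_arrangementsWithPinnacles_insert_singleton_of_subset
    {s T : Finset α} {m : α} {A B : List α} (hsm : ∀ x ∈ s, x < m) (hTs : T ⊆ s)
    (hT : T ≠ ∅) (hTs' : T ≠ s) (hA : A ∈ arrangementsWithPinnacles T ∅)
    (hB : B ∈ arrangementsWithPinnacles (s \ T) ∅) :
    A ++ m :: B ∈ arrangementsWithPinnacles (insert m s) {m} := by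
  obtain ⟨hA, hpA⟩ := mem_arrangementsWithPinnacles.1 hA
  obtain ⟨hB, hpB⟩ := mem_arrangementsWithPinnacles.1 hB
  refine (append_cons_mem_arrangementsWithPinnacles_insert_singleton hsm).2
    ⟨?_, ?_, ?_, hpA, hpB⟩
  · rw [← Multiset.coe_add, hA, hB, sdiff_val, add_tsub_cancel_of_le (val_le_iff.2 hTs)]
  · rintro rfl
    exact hT (val_eq_zero.1 hA.symm)
  · rintro rfl
    exact hTs' (Subset.antisymm hTs (sdiff_eq_empty_iff_subset.1 (val_eq_zero.1 hB.symm)))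

theorem card_arrangementsWithPinnacles_insert_singleton_eq_sum {s : Finset α} {m : α}
    (hsm : ∀ x ∈ s, x < m) :
    #(arrangementsWithPinnacles (insert m s) {m}) =
      ∑ T ∈ (s.powerset.erase ∅).erase s,
        #(arrangementsWithPinnacles T ∅) * #(arrangementsWithPinnacles (s \ T) ∅) := by
  simp_rw [← card_product]
  rw [← card_sigma]
  symm
  have hmaps : ∀ p ∈ ((s.powerset.erase ∅).erase s).sigma fun T =>
      arrangementsWithPinnacles T ∅ ×ˢ arrangementsWithPinnacles (s \ T) ∅,
      p.2.1 ++ m :: p.2.2 ∈ arrangementsWithPinnacles (insert m s) {m} := by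
    rintro ⟨T, A, B⟩ h
    simp only [mem_sigma, mem_product, mem_erase, mem_powerset] at h
    obtain ⟨⟨hTs', hT, hTs⟩, hA, hB⟩ := h
    exact append_cons_mem_arrangementsWithPinnacles_insert_singleton_of_subset hsm hTs hT hTs'
      hA hB
  refine card_bij (fun p _ => p.2.1 ++ m :: p.2.2) hmaps ?_ ?_
  · rintro ⟨T, A, B⟩ h ⟨T', A', B'⟩ h' heq
    have hlt := forall_lt_of_coe_eq_val hsm
      ((append_cons_mem_arrangementsWithPinnacles_insert_singleton hsm).1 (hmaps _ h)).1
    obtain ⟨rfl, -, rfl⟩ := (List.append_cons_inj_of_notMem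
      (fun hm => (hlt m (by simp [hm])).false) (fun hm => (hlt m (by simp [hm])).false)).1 heq
    simp only [mem_sigma, mem_product, mem_arrangementsWithPinnacles] at h h'
    obtain rfl : T = T' := val_inj.1 (h.2.1.1.symm.trans h'.2.1.1)
    rfl
  · intro L hL
    have hm : m ∈ L := L.pinnacles_subset ((mem_arrangementsWithPinnacles.1 hL).2 ▸ rfl)
    obtain ⟨A, B, rfl⟩ := List.append_of_mem hm
    obtain ⟨hAB, hA, hB, hpA, hpB⟩ :=
      (append_cons_mem_arrangementsWithPinnacles_insert_singleton hsm).1 hL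
    rw [← Multiset.coe_add] at hAB
    have hnd : (A : Multiset α).Nodup :=
      Multiset.nodup_of_le (Multiset.le_add_right _ _) (hAB ▸ s.nodup)
    refine ⟨⟨⟨A, hnd⟩, A, B⟩, ?_, rfl⟩
    simp only [mem_sigma, mem_product, mem_erase, mem_powerset, mem_arrangementsWithPinnacles,
      sdiff_val, ← hAB, add_tsub_cancel_left, ← val_le_iff, Multiset.le_add_right]
    refine ⟨⟨fun h => hB ?_, fun h => hA ?_, trivial⟩, ⟨trivial, hpA⟩, trivial, hpB⟩
    · rw [← Multiset.coe_eq_zero, ← add_eq_left.1 (hAB.trans (congrArg val h).symm)]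
    · exact (Multiset.coe_eq_zero A).1 (congrArg val h)

theorem card_arrangementsWithPinnacles_insert_singleton {s : Finset α} {m : α}
    (hs : s.Nonempty) (hsm : ∀ x ∈ s, x < m) :
    #(arrangementsWithPinnacles (insert m s) {m}) = 2 ^ (#s - 1) * (2 ^ (#s - 1) - 1) := by
  have hterm : ∀ T ∈ (s.powerset.erase ∅).erase s,
      #(arrangementsWithPinnacles T ∅) * #(arrangementsWithPinnacles (s \ T) ∅) =
        2 ^ (#s - 2) := by
    intro T hT
    simp only [mem_erase, mem_powerset] at hT
    obtain ⟨hTs, hT0, hTsub⟩ := hT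
    have hpos : 0 < #T := card_pos.2 (nonempty_iff_ne_empty.2 hT0)
    have hlt : #T < #s := card_lt_card (ssubset_of_subset_of_ne hTsub hTs)
    rw [card_arrangementsWithPinnacles_empty, card_arrangementsWithPinnacles_empty, ← pow_add,
      card_sdiff_of_subset hTsub]
    congr 1
    omega
  rw [card_arrangementsWithPinnacles_insert_singleton_eq_sum hsm, sum_const_nat hterm,
    card_erase_of_mem (by simp [hs.ne_empty]), card_erase_of_mem (by simp), card_powerset]
  obtain ⟨k, hk⟩ : ∃ k, #s = k + 1 := Nat.exists_eq_add_one.2 hs.card_pos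
  rw [hk]
  rcases k with _ | k
  · simp
  · rw [show k + 1 + 1 - 2 = k by omega, show k + 1 + 1 - 1 = k + 1 by omega, pow_succ, pow_succ,
      Nat.sub_sub, Nat.sub_mul, Nat.mul_sub_one]
    ring_nf

theorem card_arrangementsWithPinnacles_singleton {s : Finset α} {b : α} (hb : b ∈ s)
    (hr : 2 ≤ #{x ∈ s | x ≤ b}) :
    #(arrangementsWithPinnacles s {b}) = 2 ^ (#s - 2) * (2 ^ (#{x ∈ s | x ≤ b} - 2) - 1) := by
  induction s using Finset.induction_on_max with
  | empty => simp at hb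
  | insert m s hsm ih =>
    have hms : m ∉ s := fun h => (hsm m h).false
    rw [card_insert_of_notMem hms]
    rcases eq_or_ne m b with rfl | hmb
    · have hle : {x ∈ insert m s | x ≤ m} = insert m s :=
        filter_true_of_mem fun x hx => (mem_insert.1 hx).elim le_of_eq fun h => (hsm x h).le
      rw [hle, card_insert_of_notMem hms] at hr ⊢
      rw [card_arrangementsWithPinnacles_insert_singleton (card_pos.1 (by omega)) hsm]
      rfl
    · have hbs : b ∈ s := (mem_insert.1 hb).resolve_left hmb.symm
      have hle : {x ∈ insert m s | x ≤ b} = {x ∈ s | x ≤ b} := by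
        rw [filter_insert, if_neg (hsm b hbs).not_ge]
      rw [hle] at hr ⊢
      have hcard : 2 ≤ #s := hr.trans (card_filter_le _ _)
      rw [card_arrangementsWithPinnacles_insert_of_notMem ⟨b, hbs⟩ hsm
        (Set.mem_singleton_iff.not.2 hmb), ih hbs hr, ← mul_assoc, ← pow_succ']
      congr 2
      omega

end Arrangements

theorem Pin_eq_image_pinnacles {n : ℕ} (w : Equiv.Perm (Fin n)) :
    Pin w = (fun i : Fin n => i.val + 1) '' (List.ofFn w).pinnacles := by
  ext v
  simp only [Pin, IsPeak, Set.mem_ofPred_eq, Set.mem_image, List.mem_pinnacles_ofFn]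
  constructor
  · rintro ⟨i, hi, rfl⟩
    exact ⟨w i, ⟨i, hi, rfl⟩, rfl⟩
  · rintro ⟨_, ⟨i, hi, rfl⟩, rfl⟩
    exact ⟨i, hi, rfl⟩

theorem ofFn_mem_arrangementsWithPinnacles_univ_iff {n : ℕ} {w : Equiv.Perm (Fin n)}
    {P : Set (Fin n)} :
    List.ofFn w ∈ arrangementsWithPinnacles univ P ↔ (List.ofFn w).pinnacles = P := by
  rw [mem_arrangementsWithPinnacles, ← Fin.univ_val_map, Multiset.map_univ_val_equiv]
  exact and_iff_right rfl

theorem card_perm_pinnacles_ofFn {n : ℕ} (P : Set (Fin n)) :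
    Nat.card {w : Equiv.Perm (Fin n) // (List.ofFn w).pinnacles = P} =
      #(arrangementsWithPinnacles univ P) := by
  classical
  rw [Nat.card_eq_fintype_card, Fintype.card_subtype]
  refine card_bij (fun w _ => List.ofFn w) (fun w hw => ?_) (fun w _ w' _ h => ?_) ?_
  · exact ofFn_mem_arrangementsWithPinnacles_univ_iff.2 (mem_filter.1 hw).2
  · exact Equiv.ext (congrFun (List.ofFn_injective h))
  · intro L hL
    obtain ⟨hLu, hLP⟩ := mem_arrangementsWithPinnacles.1 hL
    have hlen : L.length = n := by simpa using congrArg Multiset.card hLu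
    have hnd : L.Nodup := Multiset.coe_nodup.1 (hLu ▸ univ.nodup)
    have hinj : Function.Injective fun i : Fin n => L[i.val] := fun i j h =>
      Fin.ext (hnd.getElem_inj_iff.1 h)
    set w := Equiv.ofBijective _ (Finite.injective_iff_bijective.1 hinj)
    have hw : List.ofFn w = L := List.ext_getElem (by simp [hlen]) fun i _ _ => by simp [w]
    exact ⟨w, mem_filter.2 ⟨mem_univ w, hw ▸ hLP⟩, hw⟩

theorem pcount_one_pinnacle (l n : ℕ) (hl : 3 ≤ l) (hn : l ≤ n) :
    pcount n ({l} : Set ℕ) = 2 ^ (n - 2) * (2 ^ (l - 2) - 1) := by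
  set b : Fin n := ⟨l - 1, by omega⟩
  have hPin : ∀ w : Equiv.Perm (Fin n), Pin w = {l} ↔ (List.ofFn w).pinnacles = {b} := by
    intro w
    have hsingleton : ({l} : Set ℕ) = (fun i : Fin n => i.val + 1) '' {b} := by
      rw [Set.image_singleton, Fin.val_mk, Nat.sub_add_cancel (by omega)]
    have hinj : Function.Injective fun i : Fin n => i.val + 1 := fun i j h =>
      Fin.ext (Nat.add_right_cancel h)
    rw [Pin_eq_image_pinnacles, hsingleton, (Set.image_injective.2 hinj).eq_iff]
  have hrank : #{x ∈ univ | x ≤ b} = l := by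
    rw [filter_ge_eq_Iic, Fin.card_Iic, Fin.val_mk, Nat.sub_add_cancel (by omega)]
  simp_rw [pcount, hPin]
  rw [card_perm_pinnacles_ofFn, card_arrangementsWithPinnacles_singleton (mem_univ b) (by omega),
    hrank, card_univ, Fintype.card_fin]
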